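/- arXiv:2211.10203 — 3 statements merged into one kernel-verified Lean document; each statement's English description precedes it below -/
import Mathlib

section
/- Let p ≥ 1 and let a, b be real numbers with a ≥ 0, b ≥ 0 and a + b < 1. Let Σ̄ and, for every t ∈ ℤ, Σ_t and A_t be p×p real symmetric matrices with Σ̄ and each A_t positive semidefinite, such that sup_{t∈ℤ} ‖Σ_t‖ ≤ C and sup_{t∈ℤ} ‖A_t‖ ≤ C for some constant C > 0, and such that Σ_{t+1} = (1 − a − b)·Σ̄ + a·A_t + b·Σ_t for all t ∈ ℤ. Then for every t ∈ ℤ, Σ_t ⪰ ((1 − a − b)/(1 − b))·Σ̄ in the Loewner order. -/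
open Matrix Filter Set
open scoped Matrix.Norms.L2Operator

/-!
With `c = (1 - a - b) / (1 - b)` the Loewner gaps `D t = Σ_t - c • Σ̄` satisfy the homogeneous
recursion `D (t + 1) = a • A t + b • D t`, hence `D (t + 1) ⪰ b • D t`. Iterating backwards,
`D t ⪰ b ^ k • D (t - k)` for every `k`; since the `D (t - k)` are uniformly bounded and
`b ^ k → 0`, every quadratic form of `D t` is nonnegative.
-/

theorem nonneg_of_bddBelow_of_mul_le_succ {g : ℤ → ℝ} {b : ℝ} (hb₀ : 0 ≤ b) (hb₁ : b < 1)
    (hg : BddBelow (range g)) (hstep : ∀ s, b * g s ≤ g (s + 1)) (t : ℤ) : 0 ≤ g t := by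
  obtain ⟨m, hm⟩ := hg
  have hiter : ∀ k : ℕ, b ^ k * g (t - k) ≤ g t := by
    intro k
    induction k with
    | zero => simp
    | succ k ih =>
      calc b ^ (k + 1) * g (t - ↑(k + 1)) = b ^ k * (b * g (t - ↑(k + 1))) := by ring
        _ ≤ b ^ k * g (t - k) := by
          gcongr
          have h := hstep (t - ↑(k + 1))
          rwa [show t - ↑(k + 1) + 1 = t - k by push_cast; ring] at h
        _ ≤ g t := ih
  have hlim : Tendsto (fun k : ℕ => b ^ k * m) atTop (nhds 0) := by
    simpa using (tendsto_pow_atTop_nhds_zero_of_lt_one hb₀ hb₁).mul_const m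
  refine le_of_tendsto' hlim fun k => ?_
  calc b ^ k * m ≤ b ^ k * g (t - k) := by gcongr; exact hm (mem_range_self _)
    _ ≤ g t := hiter k

theorem Matrix.norm_star_dotProduct_mulVec_le {𝕜 n : Type*} [RCLike 𝕜] [Fintype n]
    [DecidableEq n] (M : Matrix n n 𝕜) (x : n → 𝕜) :
    ‖star x ⬝ᵥ M *ᵥ x‖ ≤ ‖M‖ * ‖WithLp.toLp 2 x‖ ^ 2 := by
  have h := norm_inner_le_norm (𝕜 := 𝕜) (WithLp.toLp 2 x) (WithLp.toLp 2 (M *ᵥ x))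
  rw [EuclideanSpace.inner_toLp_toLp, dotProduct_comm] at h
  calc ‖star x ⬝ᵥ M *ᵥ x‖ ≤ ‖WithLp.toLp 2 x‖ * ‖WithLp.toLp 2 (M *ᵥ x)‖ := h
    _ ≤ ‖WithLp.toLp 2 x‖ * (‖M‖ * ‖WithLp.toLp 2 x‖) := by
      gcongr; exact M.l2_opNorm_mulVec (WithLp.toLp 2 x)
    _ = ‖M‖ * ‖WithLp.toLp 2 x‖ ^ 2 := by ring

theorem Matrix.posSemidef_of_bddAbove_norm_of_posSemidef_sub_smul {n : Type*} [Fintype n]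
    [DecidableEq n] {D : ℤ → Matrix n n ℝ} {b : ℝ} (hb₀ : 0 ≤ b) (hb₁ : b < 1)
    (hD : ∀ t, (D t).IsHermitian) (hbdd : BddAbove (range fun t => ‖D t‖))
    (hstep : ∀ t, (D (t + 1) - b • D t).PosSemidef) (t : ℤ) : (D t).PosSemidef := by
  obtain ⟨C, hC⟩ := hbdd
  refine posSemidef_iff_dotProduct_mulVec.2 ⟨hD t, fun x => ?_⟩
  refine nonneg_of_bddBelow_of_mul_le_succ (g := fun s => star x ⬝ᵥ D s *ᵥ x) hb₀ hb₁
    ⟨-(C * ‖WithLp.toLp 2 x‖ ^ 2), ?_⟩ (fun s => ?_) t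
  · rintro _ ⟨s, rfl⟩
    calc -(C * ‖WithLp.toLp 2 x‖ ^ 2) ≤ -(‖D s‖ * ‖WithLp.toLp 2 x‖ ^ 2) := by
          gcongr; exact hC (mem_range_self s)
      _ ≤ star x ⬝ᵥ D s *ᵥ x := neg_le_of_abs_le ((D s).norm_star_dotProduct_mulVec_le x)
  · have h := (hstep s).dotProduct_mulVec_nonneg x
    rwa [sub_mulVec, dotProduct_sub, smul_mulVec, dotProduct_smul, smul_eq_mul, sub_nonneg] at h

theorem bekk_loewner_lower_bound_general
    (p : ℕ) (a b : ℝ) (ha : 0 ≤ a) (hb : 0 ≤ b) (hab : a + b < 1)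
    (Sbar : Matrix (Fin p) (Fin p) ℝ) (S A : ℤ → Matrix (Fin p) (Fin p) ℝ)
    (hSbarsymm : Sbar.IsSymm) (hSsymm : ∀ t : ℤ, (S t).IsSymm)
    (hApsd : ∀ t : ℤ, (A t).PosSemidef)
    (C : ℝ)
    (hSbound : ∀ t : ℤ, ‖S t‖ ≤ C)
    (hrec : ∀ t : ℤ, S (t + 1) = (1 - a - b) • Sbar + a • A t + b • S t) :
    ∀ t : ℤ, (S t - ((1 - a - b) / (1 - b)) • Sbar).PosSemidef := by
  have hc : 1 - a - b = (1 - a - b) / (1 - b) * (1 - b) :=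
    (div_mul_cancel₀ _ (by linarith)).symm
  generalize (1 - a - b) / (1 - b) = c at hc ⊢
  have hstep (t : ℤ) : (S (t + 1) - c • Sbar) - b • (S t - c • Sbar) = a • A t := by
    rw [hrec]
    linear_combination (norm := module) hc • Sbar
  refine posSemidef_of_bddAbove_norm_of_posSemidef_sub_smul hb (by linarith)
    (fun t => isHermitian_iff_isSymm.2 ((hSsymm t).sub (hSbarsymm.smul c)))
    ⟨C + ‖c • Sbar‖, ?_⟩ (fun t => hstep t ▸ (hApsd t).smul ha)
  rintro _ ⟨t, rfl⟩
  exact (norm_sub_le _ _).trans (by gcongr; exact hSbound t)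

/-- Under the scalar BEKK recursion
`Σ_{t+1} = (1 − a − b)·Σ̄ + a·A_t + b·Σ_t` (for all `t ∈ ℤ`) with `a, b ≥ 0`, `a + b < 1`,
`Σ̄` and each `A_t` positive semidefinite, each `Σ_t` symmetric, and uniformly
operator-norm-bounded `Σ_t` and `A_t`, one has the Loewner lower bound
`Σ_t ⪰ ((1 − a − b)/(1 − b))·Σ̄` for every `t ∈ ℤ`. -/
theorem bekk_loewner_lower_bound
    (p : ℕ) (hp : 1 ≤ p) (a b : ℝ) (ha : 0 ≤ a) (hb : 0 ≤ b) (hab : a + b < 1)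
    (Sbar : Matrix (Fin p) (Fin p) ℝ) (S A : ℤ → Matrix (Fin p) (Fin p) ℝ)
    (hSbarsymm : Sbar.IsSymm) (hSsymm : ∀ t : ℤ, (S t).IsSymm)
    (hAsymm : ∀ t : ℤ, (A t).IsSymm)
    (hSbarpsd : Sbar.PosSemidef) (hApsd : ∀ t : ℤ, (A t).PosSemidef)
    (C : ℝ) (hC : 0 < C)
    (hSbound : ∀ t : ℤ, ‖S t‖ ≤ C) (hAbound : ∀ t : ℤ, ‖A t‖ ≤ C)
    (hrec : ∀ t : ℤ, S (t + 1) = (1 - a - b) • Sbar + a • A t + b • S t) :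
    ∀ t : ℤ, (S t - ((1 - a - b) / (1 - b)) • Sbar).PosSemidef :=
  bekk_loewner_lower_bound_general p a b ha hb hab Sbar S A hSbarsymm hSsymm hApsd C hSbound hrec
end

section
/- Let Σ and Σ̄ be p×p real symmetric positive semidefinite matrices and let c ∈ [0, 1] be such that Σ ⪰ c·Σ̄ in the Loewner order. Then tr((Σ^{1/2} − Σ̄^{1/2})(Σ^{1/2} − Σ̄^{1/2})ᵀ) ≤ (tr(Σ) − tr(Σ̄)) + 2(1 − √c)·tr(Σ̄). -/
open Matrix

open scoped ComplexOrder in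
/-- The positive semidefinite square root of a positive semidefinite matrix
(the definition `Matrix.PosSemidef.sqrt` of the older Mathlib, since removed). -/
noncomputable def Matrix.PosSemidef.sqrt {n 𝕜 : Type*} [Fintype n] [RCLike 𝕜] [DecidableEq n]
    {A : Matrix n n 𝕜} (hA : A.PosSemidef) : Matrix n n 𝕜 :=
  hA.1.eigenvectorUnitary.1 * diagonal ((↑) ∘ (√·) ∘ hA.1.eigenvalues) *
  (star hA.1.eigenvectorUnitary : Matrix n n 𝕜)

/-!
Write `S = Σ^{1/2}` and `T = Σ̄^{1/2}`. Since the square root is operator monotone,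
`Σ ⪰ c Σ̄` gives `S ⪰ √c T`; as the trace of a product of positive semidefinite matrices is
nonnegative, `tr (S T) ≥ √c tr (T T) = √c tr Σ̄`. Expanding,
`tr ((S - T)(S - T)ᵀ) = tr Σ + tr Σ̄ - 2 tr (S T)`, and the bound follows.
-/

open scoped MatrixOrder ComplexOrder

namespace Matrix

variable {n 𝕜 : Type*} [Fintype n] [DecidableEq n] [RCLike 𝕜]

theorem PosSemidef.sqrt_eq_cfcSqrt {A : Matrix n n 𝕜} (hA : A.PosSemidef) :
    hA.sqrt = CFC.sqrt A := by
  rw [CFC.sqrt_eq_cfc, cfc_nnreal_eq_real _ A hA.nonneg, hA.1.cfc_eq]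
  simp [PosSemidef.sqrt, IsHermitian.cfc, Function.comp_def,
    max_eq_left (hA.eigenvalues_nonneg _)]

/-- If `T - S` had an eigenvector `v` with eigenvalue `μ < 0`, then, as
`T * T - S * S = T * (T - S) + (T - S) * S`, the form `v ↦ v⋆ (T * T - S * S) v` would take the
value `μ (v⋆ T v + v⋆ S v) ≤ 0` at `v`; so `T v = S v = 0`, and then `μ v = 0`. -/
theorem le_of_mul_self_le_mul_self {S T : Matrix n n 𝕜} (hS : 0 ≤ S) (hT : 0 ≤ T)
    (h : S * S ≤ T * T) : S ≤ T := by
  rw [nonneg_iff_posSemidef] at hS hT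
  have hD : (T - S).IsHermitian := hT.1.sub hS.1
  rw [le_iff, hD.posSemidef_iff_eigenvalues_nonneg]
  intro i
  by_contra! hμ
  set μ := hD.eigenvalues i
  replace hμ : μ < 0 := hμ
  set v : n → 𝕜 := (hD.eigenvectorBasis i).ofLp
  have hv : (T - S) *ᵥ v = (μ : 𝕜) • v := by
    rw [hD.mulVec_eigenvectorBasis, RCLike.real_smul_eq_coe_smul (K := 𝕜)]
  have hMD (M : Matrix n n 𝕜) : star v ⬝ᵥ (M * (T - S)) *ᵥ v = μ * (star v ⬝ᵥ M *ᵥ v) := by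
    rw [← mulVec_mulVec, hv, mulVec_smul, dotProduct_smul, smul_eq_mul]
  have hDM (M : Matrix n n 𝕜) : star v ⬝ᵥ ((T - S) * M) *ᵥ v = μ * (star v ⬝ᵥ M *ᵥ v) := by
    rw [← mulVec_mulVec, dotProduct_mulVec, ← hD.eq, ← star_mulVec, hv, star_smul,
      RCLike.star_def, RCLike.conj_ofReal, smul_dotProduct, smul_eq_mul]
  set q := star v ⬝ᵥ T *ᵥ v + star v ⬝ᵥ S *ᵥ v
  have hq : 0 ≤ q := add_nonneg (hT.dotProduct_mulVec_nonneg v) (hS.dotProduct_mulVec_nonneg v)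
  have hμq : 0 ≤ (μ : 𝕜) * q := by
    have := h.dotProduct_mulVec_nonneg v
    rwa [show T * T - S * S = T * (T - S) + (T - S) * S by noncomm_ring, add_mulVec,
      dotProduct_add, hMD, hDM, ← mul_add] at this
  have hq0 : q = 0 := by
    have : 0 ≤ ((-μ : ℝ) : 𝕜) * q := mul_nonneg (RCLike.ofReal_nonneg.mpr (by linarith)) hq
    rw [RCLike.ofReal_neg, neg_mul, neg_nonneg] at this
    simpa [hμ.ne] using le_antisymm this hμq
  obtain ⟨hTv, hSv⟩ := (add_eq_zero_iff_of_nonneg (hT.dotProduct_mulVec_nonneg v)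
    (hS.dotProduct_mulVec_nonneg v)).mp hq0
  have hμv : (μ : 𝕜) • v = 0 := by
    rw [← hv, sub_mulVec, (hT.dotProduct_mulVec_zero_iff v).mp hTv,
      (hS.dotProduct_mulVec_zero_iff v).mp hSv, sub_zero]
  exact hD.eigenvectorBasis.orthonormal.ne_zero i (by simpa [hμ.ne, v] using hμv)

theorem sqrt_le_sqrt {A B : Matrix n n 𝕜} (h : A ≤ B) : CFC.sqrt A ≤ CFC.sqrt B := by
  by_cases hA : 0 ≤ A
  · refine le_of_mul_self_le_mul_self (CFC.sqrt_nonneg A) (CFC.sqrt_nonneg B) ?_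
    rwa [CFC.sqrt_mul_sqrt_self A, CFC.sqrt_mul_sqrt_self B (hA.trans h)]
  · rw [CFC.sqrt_of_not_nonneg hA]
    exact CFC.sqrt_nonneg B

theorem sqrt_smul {A : Matrix n n 𝕜} (hA : 0 ≤ A) {c : ℝ} (hc : 0 ≤ c) :
    CFC.sqrt (c • A) = √c • CFC.sqrt A := by
  refine CFC.sqrt_unique ?_ ?_
  · rw [smul_mul_smul_comm, Real.mul_self_sqrt hc, CFC.sqrt_mul_sqrt_self A]
  · exact ((CFC.sqrt_nonneg A).posSemidef.smul (Real.sqrt_nonneg c)).nonneg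

theorem trace_mul_nonneg {A B : Matrix n n 𝕜} (hA : 0 ≤ A) (hB : 0 ≤ B) :
    0 ≤ (A * B).trace := by
  have hR : (CFC.sqrt B)ᴴ = CFC.sqrt B := (CFC.sqrt_nonneg B).isSelfAdjoint
  rw [← CFC.sqrt_mul_sqrt_self B hB, ← mul_assoc, trace_mul_cycle]
  simpa only [hR] using (hA.posSemidef.conjTranspose_mul_mul_same (CFC.sqrt B)).trace_nonneg

end Matrix

theorem trace_sq_diff_sqrt_le_general
    (p : ℕ) {Sig Sbar : Matrix (Fin p) (Fin p) ℝ}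
    (hSig : Sig.PosSemidef) (hSbar : Sbar.PosSemidef)
    (c : ℝ) (hc0 : 0 ≤ c)
    (hLoew : (Sig - c • Sbar).PosSemidef) :
    ((hSig.sqrt - hSbar.sqrt) * (hSig.sqrt - hSbar.sqrt)ᵀ).trace ≤
      (Sig.trace - Sbar.trace) + 2 * (1 - Real.sqrt c) * Sbar.trace := by
  rw [hSig.sqrt_eq_cfcSqrt, hSbar.sqrt_eq_cfcSqrt]
  set S := CFC.sqrt Sig
  set T := CFC.sqrt Sbar
  have hmono : √c • T ≤ S := by
    rw [← sqrt_smul hSbar.nonneg hc0]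
    exact sqrt_le_sqrt hLoew
  have hST : √c * Sbar.trace ≤ (S * T).trace := by
    have := trace_mul_nonneg (sub_nonneg.mpr hmono) (CFC.sqrt_nonneg Sbar)
    rwa [sub_mul, trace_sub, smul_mul_assoc, CFC.sqrt_mul_sqrt_self Sbar hSbar.nonneg,
      trace_smul, smul_eq_mul, sub_nonneg] at this
  have hsymm : (S - T)ᵀ = S - T :=
    (CFC.sqrt_nonneg Sig).isSelfAdjoint.sub (CFC.sqrt_nonneg Sbar).isSelfAdjoint
  have hexpand : ((S - T) * (S - T)ᵀ).trace = Sig.trace + Sbar.trace - 2 * (S * T).trace := by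
    rw [hsymm, sub_mul, mul_sub, mul_sub, trace_sub, trace_sub, trace_sub,
      CFC.sqrt_mul_sqrt_self Sig hSig.nonneg, CFC.sqrt_mul_sqrt_self Sbar hSbar.nonneg,
      trace_mul_comm T S]
    ring
  linarith

/-- If `Σ ⪰ c·Σ̄` in the Loewner order for PSD matrices `Σ, Σ̄` and
`c ∈ [0,1]`, then
`tr((Σ^{1/2} − Σ̄^{1/2})(Σ^{1/2} − Σ̄^{1/2})ᵀ) ≤ (tr Σ − tr Σ̄) + 2(1 − √c)·tr Σ̄`. -/
theorem trace_sq_diff_sqrt_le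
    (p : ℕ) {Sig Sbar : Matrix (Fin p) (Fin p) ℝ}
    (hSig : Sig.PosSemidef) (hSbar : Sbar.PosSemidef)
    (c : ℝ) (hc0 : 0 ≤ c) (hc1 : c ≤ 1)
    (hLoew : (Sig - c • Sbar).PosSemidef) :
    ((hSig.sqrt - hSbar.sqrt) * (hSig.sqrt - hSbar.sqrt)ᵀ).trace ≤
      (Sig.trace - Sbar.trace) + 2 * (1 - Real.sqrt c) * Sbar.trace :=
  trace_sq_diff_sqrt_le_general p hSig hSbar c hc0 hLoew
end

section
/- Let a, b ≥ 0 with a + b < 1 and a² + (a + b)² < 1, and let S, T, X, Y be real numbers with S ≥ 0, Y ≥ T², and X = ((1 − (a + b)²)·S + a²·Y)/(1 − a² − (a + b)²). Then X ≥ S + (a²/(2(1 − a − b)))·T². -/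
/-- Key algebraic step in the non-reducible BEKK second-moment bound:
if `a, b ≥ 0`, `a + b < 1`, `a² + (a+b)² < 1`, `S ≥ 0`, `Y ≥ T²` and
`X = ((1 − (a+b)²)·S + a²·Y)/(1 − a² − (a+b)²)`, then
`X ≥ S + (a²/(2(1 − a − b)))·T²`. -/
theorem bekk_second_moment_algebraic_bound
    (a b S T X Y : ℝ) (ha : 0 ≤ a) (hb : 0 ≤ b) (hab : a + b < 1)
    (hab2 : a ^ 2 + (a + b) ^ 2 < 1) (hS : 0 ≤ S) (hY : T ^ 2 ≤ Y)
    (hX : X = ((1 - (a + b) ^ 2) * S + a ^ 2 * Y) / (1 - a ^ 2 - (a + b) ^ 2)) :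
    X ≥ S + a ^ 2 / (2 * (1 - a - b)) * T ^ 2 := by
  have hD : 0 < 1 - a ^ 2 - (a + b) ^ 2 := by linarith
  have hE : 0 < 2 * (1 - a - b) := by linarith
  have hXeq : X = S + a ^ 2 * (S + Y) / (1 - a ^ 2 - (a + b) ^ 2) := by
    rw [hX]; field_simp; ring
  have key : a ^ 2 / (2 * (1 - a - b)) * T ^ 2 ≤ a ^ 2 * (S + Y) / (1 - a ^ 2 - (a + b) ^ 2) := by
    rw [div_mul_eq_mul_div, div_le_div_iff₀ hE hD]
    nlinarith [mul_nonneg (mul_nonneg (sq_nonneg a) (sq_nonneg T)) (by positivity : (0:ℝ) ≤ a ^ 2 + (1 - a - b) ^ 2),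
      mul_nonneg (mul_nonneg (sq_nonneg a) (sub_nonneg.2 hY)) hE.le,
      mul_nonneg (mul_nonneg (sq_nonneg a) hS) hE.le]
  linarith
end
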